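/- arXiv:2003.13281 — 2 statements merged into one kernel-verified Lean document; each statement's English description precedes it below -/
import Mathlib

section
/- Let (m,n1,n2,s1,s2) be an admissible tuple for the prime 2, and let G = G_2(m,n1,n2,s1,s2) with generators b1, b2 and a = [b2,b1]. For each natural number k let H_k be the subgroup of G generated by a^(2^k), b1^(2^(k+1)) and b2^(2^(k+1)), and let K_k be the subgroup generated by a^(2^(k+1)), b1^(2^(k+2)) and b2^(2^(k+2)). Then the least natural number k such that the index of K_k in H_k is strictly less than 8 equals min(n2 - 1, s1, s2). -/
/-- The set of relators for the presented group `G_p(m,n1,n2,s1,s2)` on two generators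
`b1, b2`, with `a = [b2,b1] = b2⁻¹ * b1⁻¹ * b2 * b1`:
`a ^ p^m = 1`, `[b1,a] = 1`, `[b2,a] = 1`, `b1 ^ p^n1 = a ^ p^s1`, `b2 ^ p^n2 = a ^ p^s2`. -/
def pgRels (p m n1 n2 s1 s2 : ℕ) : Set (FreeGroup (Fin 2)) :=
  let b1 : FreeGroup (Fin 2) := FreeGroup.of 0
  let b2 : FreeGroup (Fin 2) := FreeGroup.of 1
  let a : FreeGroup (Fin 2) := b2⁻¹ * b1⁻¹ * b2 * b1
  {a ^ p ^ m,
   b1⁻¹ * a⁻¹ * b1 * a,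
   b2⁻¹ * a⁻¹ * b2 * a,
   b1 ^ p ^ n1 * (a ^ p ^ s1)⁻¹,
   b2 ^ p ^ n2 * (a ^ p ^ s2)⁻¹}

/-- The group `G_p(m,n1,n2,s1,s2)` given by the presentation
`⟨b1, b2 ∣ [b2,b1]^(p^m) = [b1,[b2,b1]] = [b2,[b2,b1]] = 1,
  b1^(p^n1) = [b2,b1]^(p^s1), b2^(p^n2) = [b2,b1]^(p^s2)⟩`. -/
abbrev GG (p m n1 n2 s1 s2 : ℕ) : Type := PresentedGroup (pgRels p m n1 n2 s1 s2)

/-- A tuple `(m,n1,n2,s1,s2)` is admissible for the prime `p` if: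
(A1) `0 < m` and `s1 ≤ m`, `s2 ≤ m ≤ n2 ≤ n1`;
(A2) `n1 - s1 ≥ n2 - s2` (stated without truncated subtraction);
(A3) if `p = 2` then `s1 < n1`;
(A4) either `s1 ≥ s2`, or `p = 2` and `n1 = n2 = m = s2 = s1 + 1`. -/
def Admissible (p m n1 n2 s1 s2 : ℕ) : Prop :=
  (0 < m ∧ s1 ≤ m ∧ s2 ≤ m ∧ m ≤ n2 ∧ n2 ≤ n1) ∧
  n2 + s1 ≤ n1 + s2 ∧
  (p = 2 → s1 < n1) ∧
  (s2 ≤ s1 ∨ (p = 2 ∧ n1 = n2 ∧ n2 = m ∧ m = s2 ∧ s2 = s1 + 1))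

/-!
Write `x = a^(2^k)`, `y = b1^(2^(k+1))`, `z = b2^(2^(k+1))`, so that `H_k = ⟨x, y, z⟩` and
`K_k = ⟨x², y², z²⟩ = H_(k+1)`. Since `a` is central and the commutator of `y` and `z` is a power
of `x²`, the subgroup `K_k` is normal in `H_k` and the quotient is generated by the images of
`x, y, z`, which are commuting involutions; hence `[H_k : K_k]` divides `8`.
At `k = min(n2 - 1, s1, s2)` the relations `b1^(2^n1) = a^(2^s1)`, `b2^(2^n2) = a^(2^s2)` together
with admissibility give `x ∈ K_k`, `x = y`, `x = z` or `z ∈ K_k`, so two involutions suffice and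
the index divides `4`. For smaller `k`, `G` maps onto a Heisenberg group with sides `ℤ/2^(k+2)`
and centre `ℤ/2^(k+1)`; this map kills `K_k` and separates the eight products `x^i y^j z^l` with
`i, j, l ∈ {0, 1}`, so the index is `8`.
-/

open Subgroup
open scoped commutatorElement

section

variable {G : Type*} [Group G]

theorem Subgroup.card_closure_range_dvd_two_pow {ι : Type*} [Fintype ι] (q : ι → G)
    (hcomm : ∀ i j, Commute (q i) (q j)) (hsq : ∀ i, q i ^ 2 = 1) :
    Nat.card (closure (Set.range q)) ∣ 2 ^ Fintype.card ι := by
  have hzcomm : Pairwise fun i j =>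
      ∀ a b, a ∈ zpowers (q i) → b ∈ zpowers (q j) → Commute a b := by
    rintro i j - a b ⟨m, rfl⟩ ⟨n, rfl⟩
    exact (hcomm i j).zpow_zpow m n
  have hrange : (noncommPiCoprod hzcomm).range = closure (Set.range q) := by
    rw [noncommPiCoprod_range, ← Set.iUnion_singleton_eq_range, closure_iUnion]
    simp only [zpowers_eq_closure]
  calc Nat.card (closure (Set.range q))
      ∣ Nat.card (∀ i, zpowers (q i)) := hrange ▸ card_range_dvd _
    _ = ∏ i, orderOf (q i) := by simp only [Nat.card_pi, Nat.card_zpowers]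
    _ ∣ ∏ _i : ι, 2 :=
      Finset.prod_dvd_prod_of_dvd _ _ fun i _ => orderOf_dvd_of_pow_eq_one (hsq i)
    _ = 2 ^ Fintype.card ι := by simp

theorem Subgroup.index_dvd_two_pow (N : Subgroup G) [N.Normal] {ι : Type*} [Fintype ι]
    (g : ι → G) (hgen : closure (Set.range g) ⊔ N = ⊤) (hcomm : ∀ i j, ⁅g i, g j⁆ ∈ N)
    (hsq : ∀ i, g i ^ 2 ∈ N) : N.index ∣ 2 ^ Fintype.card ι := by
  set π := QuotientGroup.mk' N
  have hgenQ : closure (Set.range (π ∘ g)) = ⊤ := by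
    rw [Set.range_comp, ← MonoidHom.map_closure,
      ← map_top_of_surjective π (QuotientGroup.mk'_surjective N), ← hgen, map_sup,
      QuotientGroup.map_mk'_self, sup_bot_eq]
  rw [index_eq_card, ← card_top, ← hgenQ]
  refine card_closure_range_dvd_two_pow _ (fun i j => ?_) (fun i => ?_)
  · rw [← commutatorElement_eq_one_iff_commute, Function.comp_apply, Function.comp_apply,
      ← map_commutatorElement, QuotientGroup.mk'_apply, QuotientGroup.eq_one_iff]
    exact hcomm i j
  · rw [Function.comp_apply, ← map_pow, QuotientGroup.mk'_apply, QuotientGroup.eq_one_iff]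
    exact hsq i

theorem Subgroup.relIndex_dvd_two_pow {K H : Subgroup G} (hKH : K ≤ H) (hnorm : H ≤ normalizer K)
    {ι : Type*} [Fintype ι] (g : ι → G) (hgH : ∀ i, g i ∈ H)
    (hgen : H ≤ closure (Set.range g) ⊔ K) (hcomm : ∀ i j, ⁅g i, g j⁆ ∈ K)
    (hsq : ∀ i, g i ^ 2 ∈ K) : K.relIndex H ∣ 2 ^ Fintype.card ι := by
  have := normal_subgroupOf_of_le_normalizer hnorm
  refine index_dvd_two_pow (K.subgroupOf H) (fun i => ⟨g i, hgH i⟩) ?_ (fun i j => hcomm i j)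
    (fun i => hsq i)
  apply map_injective H.subtype_injective
  rw [map_sup, MonoidHom.map_closure, ← Set.range_comp, map_subgroupOf_eq_of_le hKH,
    ← MonoidHom.range_eq_map, range_subtype]
  exact le_antisymm (sup_le (closure_le _ |>.2 (Set.range_subset_iff.2 hgH)) hKH) hgen

theorem Subgroup.card_le_relIndex_of_injective {G' : Type*} [Group G'] {K H : Subgroup G}
    (φ : G →* G') (hK : K ≤ φ.ker) (hKH : K.relIndex H ≠ 0) {ι : Type*} (f : ι → G)
    (hfH : ∀ i, f i ∈ H) (hinj : Function.Injective (φ ∘ f)) : Nat.card ι ≤ K.relIndex H := by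
  have hker : φ.ker.relIndex H ≠ 0 := ne_zero_of_dvd_ne_zero hKH (relIndex_dvd_of_le_left H hK)
  have : Finite (H.map φ) := Nat.finite_of_card_ne_zero (relIndex_ker (K := H) φ ▸ hker)
  calc Nat.card ι ≤ Nat.card (H.map φ) :=
        Nat.card_le_card_of_injective (fun i => ⟨φ (f i), mem_map_of_mem φ (hfH i)⟩)
          fun i j hij => hinj (congrArg Subtype.val hij)
    _ = φ.ker.relIndex H := (relIndex_ker (K := H) φ).symm
    _ ≤ K.relIndex H := relIndex_le_of_le_left hK hKH

theorem Subgroup.mem_normalizer_closure {T : Set G} {u : G} (hu : u ^ 2 ∈ closure T)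
    (hconj : ∀ t ∈ T, u * t * u⁻¹ ∈ closure T) : u ∈ normalizer (closure T) := by
  have hle : closure T ≤ (closure T).comap (MulAut.conj u).toMonoidHom := (closure_le _).2 hconj
  refine mem_normalizer_iff.2 fun t => ⟨fun ht => hle ht, fun ht => ?_⟩
  -- conjugation by `u⁻¹` is conjugation by `u` followed by conjugation by `u⁻² ∈ closure T`
  have key : t = (u ^ 2)⁻¹ * (u * (u * t * u⁻¹) * u⁻¹) * u ^ 2 := by group
  rw [key]
  exact mul_mem (mul_mem (inv_mem hu) (hle ht)) hu

theorem conj_sq_mem {K : Subgroup G} {u v : G} (hv : v ^ 2 ∈ K) (hc : ⁅u, v⁆ ∈ K)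
    (hcv : Commute ⁅u, v⁆ v) : u * v ^ 2 * u⁻¹ ∈ K := by
  have : u * v * u⁻¹ = ⁅u, v⁆ * v := by rw [commutatorElement_def]; group
  rw [← conj_pow, this, hcv.mul_pow]
  exact mul_mem (pow_mem hc 2) hv

theorem pow_mul_pow_of_mul_eq {u v c : G} (h : v * u = u * v * c) (hcu : Commute c u)
    (hcv : Commute c v) (i j : ℕ) : v ^ j * u ^ i = u ^ i * v ^ j * c ^ (i * j) := by
  have hv (n : ℕ) : v * u ^ n = u ^ n * v * c ^ n := by
    induction n with
    | zero => simp
    | succ n ih =>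
      rw [pow_succ, ← mul_assoc, ih, mul_assoc (u ^ n * v), (hcu.pow_left n).eq, ← mul_assoc,
        mul_assoc (u ^ n) v u, h]
      group
  induction j with
  | zero => simp
  | succ j ih =>
    rw [pow_succ, mul_assoc, hv, ← mul_assoc, ← mul_assoc, ih, mul_assoc _ (c ^ (i * j)),
      (hcv.pow_left _).eq, Nat.mul_succ, pow_add]
    simp only [mul_assoc]

end

section SquaresOfThreeGenerators

variable {G : Type*} [Group G] {x y z : G} {w : ℕ}

theorem commute_of_mem_zpowers_sq (hxy : Commute x y) (hxz : Commute x z) {c : G}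
    (hc : c ∈ zpowers (x ^ 2)) {v : G} (hv : v ∈ ({x, y, z} : Set G)) : Commute c v := by
  obtain ⟨n, rfl⟩ := hc
  have hx : Commute x v := by
    rcases hv with hv | hv | hv <;> subst v
    exacts [Commute.refl x, hxy, hxz]
  exact (hx.pow_left 2).zpow_left n

theorem commutatorElement_mem_zpowers_sq (hxy : Commute x y) (hxz : Commute x z)
    (hzy : z * y = y * z * x ^ (2 * w)) {u v : G} (hu : u ∈ ({x, y, z} : Set G))
    (hv : v ∈ ({x, y, z} : Set G)) : ⁅u, v⁆ ∈ zpowers (x ^ 2) := by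
  have hzy' : ⁅z, y⁆ ∈ zpowers (x ^ 2) := by
    have hc : Commute (y * z) (x ^ (2 * w)) := (hxy.mul_right hxz).pow_left _ |>.symm
    rw [commutatorElement_def, hzy, show y * z * x ^ (2 * w) * z⁻¹ * y⁻¹ =
      y * z * x ^ (2 * w) * (y * z)⁻¹ by group, hc.eq, mul_inv_cancel_right, pow_mul]
    exact pow_mem (mem_zpowers _) w
  have hcomm {g h : G} (hgh : Commute g h) : ⁅g, h⁆ ∈ zpowers (x ^ 2) := by
    rw [commutatorElement_eq_one_iff_commute.2 hgh]
    exact one_mem _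
  rcases hu with hu | hu | hu <;> rcases hv with hv | hv | hv <;> subst u v
  · exact hcomm (Commute.refl x)
  · exact hcomm hxy
  · exact hcomm hxz
  · exact hcomm hxy.symm
  · exact hcomm (Commute.refl y)
  · rw [← commutatorElement_inv]
    exact inv_mem hzy'
  · exact hcomm hxz.symm
  · exact hzy'
  · exact hcomm (Commute.refl z)

theorem sq_mem_closure_sq {v : G} (hv : v ∈ ({x, y, z} : Set G)) :
    v ^ 2 ∈ closure {x ^ 2, y ^ 2, z ^ 2} := by
  rcases hv with hv | hv | hv <;> subst v <;> exact subset_closure (by simp)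

theorem closure_sq_le_closure : closure {x ^ 2, y ^ 2, z ^ 2} ≤ closure {x, y, z} := by
  rw [closure_le]
  rintro _ (rfl | rfl | rfl | rfl) <;> exact pow_mem (subset_closure (by simp)) 2

theorem zpowers_sq_le_closure_sq : zpowers (x ^ 2) ≤ closure {x ^ 2, y ^ 2, z ^ 2} :=
  zpowers_le.2 (subset_closure (by simp))

theorem closure_le_normalizer_closure_sq (hxy : Commute x y) (hxz : Commute x z)
    (hzy : z * y = y * z * x ^ (2 * w)) :
    closure {x, y, z} ≤ normalizer (closure {x ^ 2, y ^ 2, z ^ 2} : Set G) := by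
  refine (closure_le _).2 fun u hu => mem_normalizer_closure (sq_mem_closure_sq hu) ?_
  have hconj {v : G} (hv : v ∈ ({x, y, z} : Set G)) :
      u * v ^ 2 * u⁻¹ ∈ closure {x ^ 2, y ^ 2, z ^ 2} :=
    have hc := commutatorElement_mem_zpowers_sq hxy hxz hzy hu hv
    conj_sq_mem (sq_mem_closure_sq hv) (zpowers_sq_le_closure_sq hc)
      (commute_of_mem_zpowers_sq hxy hxz hc hv)
  rintro _ (rfl | rfl | rfl)
  exacts [hconj (by simp), hconj (by simp), hconj (by simp)]

theorem relIndex_closure_sq_dvd_two_pow (hxy : Commute x y) (hxz : Commute x z)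
    (hzy : z * y = y * z * x ^ (2 * w)) {ι : Type*} [Fintype ι] (g : ι → G)
    (hg : ∀ i, g i ∈ ({x, y, z} : Set G))
    (hgen : ∀ v ∈ ({x, y, z} : Set G),
      v ∈ closure (Set.range g) ⊔ closure {x ^ 2, y ^ 2, z ^ 2}) :
    (closure {x ^ 2, y ^ 2, z ^ 2}).relIndex (closure {x, y, z}) ∣ 2 ^ Fintype.card ι :=
  relIndex_dvd_two_pow closure_sq_le_closure (closure_le_normalizer_closure_sq hxy hxz hzy) g
    (fun i => subset_closure (hg i)) ((closure_le _).2 hgen)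
    (fun i j =>
      zpowers_sq_le_closure_sq (commutatorElement_mem_zpowers_sq hxy hxz hzy (hg i) (hg j)))
    (fun i => sq_mem_closure_sq (hg i))

theorem relIndex_closure_sq_dvd_eight (hxy : Commute x y) (hxz : Commute x z)
    (hzy : z * y = y * z * x ^ (2 * w)) :
    (closure {x ^ 2, y ^ 2, z ^ 2}).relIndex (closure {x, y, z}) ∣ 8 := by
  simpa using relIndex_closure_sq_dvd_two_pow hxy hxz hzy ![x, y, z]
    (fun i => by fin_cases i <;> simp) fun v hv => by
      rcases hv with hv | hv | hv <;> subst v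
      exacts [mem_sup_left (subset_closure ⟨0, rfl⟩), mem_sup_left (subset_closure ⟨1, rfl⟩),
        mem_sup_left (subset_closure ⟨2, rfl⟩)]

theorem relIndex_closure_sq_dvd_four (hxy : Commute x y) (hxz : Commute x z)
    (hzy : z * y = y * z * x ^ (2 * w))
    (h : x ∈ closure {x ^ 2, y ^ 2, z ^ 2} ∨ x = y ∨ x = z ∨ z ∈ closure {x ^ 2, y ^ 2, z ^ 2}) :
    (closure {x ^ 2, y ^ 2, z ^ 2}).relIndex (closure {x, y, z}) ∣ 4 := by
  have of_yz (hx : x ∈ closure (Set.range ![y, z]) ⊔ closure {x ^ 2, y ^ 2, z ^ 2}) :=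
    relIndex_closure_sq_dvd_two_pow hxy hxz hzy ![y, z]
      (fun i => by fin_cases i <;> simp) fun v hv => by
        rcases hv with hv | hv | hv <;> subst v
        exacts [hx, mem_sup_left (subset_closure ⟨0, rfl⟩),
          mem_sup_left (subset_closure ⟨1, rfl⟩)]
  have of_xy (hz : z ∈ closure (Set.range ![x, y]) ⊔ closure {x ^ 2, y ^ 2, z ^ 2}) :=
    relIndex_closure_sq_dvd_two_pow hxy hxz hzy ![x, y]
      (fun i => by fin_cases i <;> simp) fun v hv => by
        rcases hv with hv | hv | hv <;> subst v
        exacts [mem_sup_left (subset_closure ⟨0, rfl⟩), mem_sup_left (subset_closure ⟨1, rfl⟩),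
          hz]
  simp only [Fintype.card_fin] at of_yz of_xy
  rcases h with hxK | hxy | hxz | hzK
  · exact of_yz (mem_sup_right hxK)
  · exact of_yz (mem_sup_left (subset_closure ⟨0, hxy.symm⟩))
  · exact of_yz (mem_sup_left (subset_closure ⟨1, hxz.symm⟩))
  · exact of_xy (mem_sup_right hzK)

end SquaresOfThreeGenerators

/-- Upper unitriangular matrices `[[1, y, z], [0, 1, x], [0, 0, 1]]` over `R`, with the corner
entry read in `S` through `f`. -/
@[ext]
structure Heisenberg {R S : Type*} [CommRing R] [CommRing S] (f : R →+* S) where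
  x : R
  y : R
  z : S

namespace Heisenberg

variable {R S : Type*} [CommRing R] [CommRing S] {f : R →+* S}

instance : Mul (Heisenberg f) := ⟨fun p q => ⟨p.x + q.x, p.y + q.y, p.z + q.z + f (p.y * q.x)⟩⟩

instance : One (Heisenberg f) := ⟨⟨0, 0, 0⟩⟩

instance : Inv (Heisenberg f) := ⟨fun p => ⟨-p.x, -p.y, -p.z + f (p.y * p.x)⟩⟩

@[simp] theorem mul_x (p q : Heisenberg f) : (p * q).x = p.x + q.x := rfl
@[simp] theorem mul_y (p q : Heisenberg f) : (p * q).y = p.y + q.y := rfl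
@[simp] theorem mul_z (p q : Heisenberg f) : (p * q).z = p.z + q.z + f (p.y * q.x) := rfl
@[simp] theorem one_x : (1 : Heisenberg f).x = 0 := rfl
@[simp] theorem one_y : (1 : Heisenberg f).y = 0 := rfl
@[simp] theorem one_z : (1 : Heisenberg f).z = 0 := rfl
@[simp] theorem inv_x (p : Heisenberg f) : p⁻¹.x = -p.x := rfl
@[simp] theorem inv_y (p : Heisenberg f) : p⁻¹.y = -p.y := rfl
@[simp] theorem inv_z (p : Heisenberg f) : p⁻¹.z = -p.z + f (p.y * p.x) := rfl

instance : Group (Heisenberg f) :=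
  Group.ofLeftAxioms (fun p q r => by ext <;> simp <;> ring) (fun p => by ext <;> simp)
    (fun p => by ext <;> simp)

def X : Heisenberg f := ⟨1, 0, 0⟩
def Y : Heisenberg f := ⟨0, 1, 0⟩
def Z : Heisenberg f := ⟨0, 0, 1⟩

theorem X_pow (n : ℕ) : (X : Heisenberg f) ^ n = ⟨n, 0, 0⟩ := by
  induction n with
  | zero => ext <;> simp
  | succ n ih => rw [pow_succ, ih]; ext <;> simp [X]

theorem Y_pow (n : ℕ) : (Y : Heisenberg f) ^ n = ⟨0, n, 0⟩ := by
  induction n with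
  | zero => ext <;> simp
  | succ n ih => rw [pow_succ, ih]; ext <;> simp [Y]

theorem Z_pow (n : ℕ) : (Z : Heisenberg f) ^ n = ⟨0, 0, n⟩ := by
  induction n with
  | zero => ext <;> simp
  | succ n ih => rw [pow_succ, ih]; ext <;> simp [Z]

theorem commute_Z (p : Heisenberg f) : Commute Z p := by
  ext <;> simp [Z, add_comm]

theorem Y_inv_mul_X_inv_mul_Y_mul_X : (Y⁻¹ * X⁻¹ * Y * X : Heisenberg f) = Z := by
  ext <;> simp [X, Y, Z]

end Heisenberg

theorem Admissible.min_cases {m n1 n2 s1 s2 : ℕ} (h : Admissible 2 m n1 n2 s1 s2) :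
    let k := min (n2 - 1) (min s1 s2)
    (k = s2 ∧ k + 2 ≤ n2) ∨ (k = s2 ∧ k + 1 = n2) ∨ (k + 1 = s2 ∧ k + 1 = n2) ∨
      (k = s1 ∧ k + 1 = n1) := by
  obtain ⟨⟨hm, -, hs2, hmn2, -⟩, -, -, h4⟩ := h
  omega

theorem Admissible.lt_min {m n1 n2 s1 s2 k : ℕ} (h : Admissible 2 m n1 n2 s1 s2)
    (hk : k < min (n2 - 1) (min s1 s2)) :
    k + 1 ≤ m ∧ k + 2 ≤ n1 ∧ k + 2 ≤ n2 ∧ k + 1 ≤ s1 ∧ k + 1 ≤ s2 := by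
  obtain ⟨⟨-, hs1, -, -, hn21⟩, -⟩ := h
  omega

theorem ZMod.two_pow_mul_injective (d : ℕ) :
    Function.Injective fun i : Fin 2 => ((2 ^ d * i : ℕ) : ZMod (2 ^ (d + 1))) := by
  have hlt (i : Fin 2) : 2 ^ d * (i : ℕ) < 2 ^ (d + 1) := by
    rw [pow_succ]
    exact Nat.mul_lt_mul_of_pos_left i.isLt (by positivity)
  intro i j h
  rw [ZMod.natCast_eq_natCast_iff', Nat.mod_eq_of_lt (hlt i), Nat.mod_eq_of_lt (hlt j)] at h
  exact Fin.ext (Nat.eq_of_mul_eq_mul_left (by positivity) h)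

namespace GG

variable {p m n1 n2 s1 s2 : ℕ}

abbrev b1 : GG p m n1 n2 s1 s2 := PresentedGroup.of 0

abbrev b2 : GG p m n1 n2 s1 s2 := PresentedGroup.of 1

def a : GG p m n1 n2 s1 s2 := b2⁻¹ * b1⁻¹ * b2 * b1

/-- `H_k` of the statement; its `K_k` is `H (k + 1)`. -/
def H (k : ℕ) : Subgroup (GG p m n1 n2 s1 s2) :=
  closure {a ^ p ^ k, b1 ^ p ^ (k + 1), b2 ^ p ^ (k + 1)}

theorem commute_a_b1 : Commute (a : GG p m n1 n2 s1 s2) b1 := by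
  have h := PresentedGroup.one_of_mem (rels := pgRels p m n1 n2 s1 s2)
    (Set.mem_insert_of_mem _ (Set.mem_insert _ _))
  simp only [map_mul, map_inv] at h
  refine (Commute.inv_inv_iff.1 (commutatorElement_eq_one_iff_commute.1 ?_)).symm
  rw [commutatorElement_def, inv_inv, inv_inv]
  exact h

theorem commute_a_b2 : Commute (a : GG p m n1 n2 s1 s2) b2 := by
  have h := PresentedGroup.one_of_mem (rels := pgRels p m n1 n2 s1 s2)
    (Set.mem_insert_of_mem _ <| Set.mem_insert_of_mem _ (Set.mem_insert _ _))
  simp only [map_mul, map_inv] at h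
  refine (Commute.inv_inv_iff.1 (commutatorElement_eq_one_iff_commute.1 ?_)).symm
  rw [commutatorElement_def, inv_inv, inv_inv]
  exact h

theorem b2_mul_b1 : (b2 : GG p m n1 n2 s1 s2) * b1 = b1 * b2 * a := by
  rw [a]
  group

theorem b1_pow : (b1 : GG p m n1 n2 s1 s2) ^ p ^ n1 = a ^ p ^ s1 := by
  have h := PresentedGroup.mk_eq_mk_of_mul_inv_mem (rels := pgRels p m n1 n2 s1 s2)
    (Set.mem_insert_of_mem _ <| Set.mem_insert_of_mem _ <| Set.mem_insert_of_mem _ <|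
      Set.mem_insert _ _)
  simp only [map_mul, map_inv, map_pow] at h
  exact h

theorem b2_pow : (b2 : GG p m n1 n2 s1 s2) ^ p ^ n2 = a ^ p ^ s2 := by
  have h := PresentedGroup.mk_eq_mk_of_mul_inv_mem (rels := pgRels p m n1 n2 s1 s2)
    (Set.mem_insert_of_mem _ <| Set.mem_insert_of_mem _ <| Set.mem_insert_of_mem _ <|
      Set.mem_insert_of_mem _ rfl)
  simp only [map_mul, map_inv, map_pow] at h
  exact h

section ToHeisenberg

open Heisenberg

variable {R S : Type*} [CommRing R] [CommRing S]

def toHeisenberg (f : R →+* S) (hm : (p : S) ^ m = 0) (hn1 : (p : R) ^ n1 = 0)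
    (hn2 : (p : R) ^ n2 = 0) (hs1 : (p : S) ^ s1 = 0) (hs2 : (p : S) ^ s2 = 0) :
    GG p m n1 n2 s1 s2 →* Heisenberg f :=
  PresentedGroup.toGroup (f := ![(X : Heisenberg f), Y]) <| by
    have hZ : FreeGroup.lift ![(X : Heisenberg f), Y]
        ((FreeGroup.of 1)⁻¹ * (FreeGroup.of 0)⁻¹ * FreeGroup.of 1 * FreeGroup.of 0) = Z := by
      simp [Y_inv_mul_X_inv_mul_Y_mul_X]
    rintro r (rfl | rfl | rfl | rfl | rfl)
    all_goals
      simp only [map_mul, map_inv, map_pow, hZ, FreeGroup.lift_apply_of, Matrix.cons_val_zero,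
        Matrix.cons_val_one, Matrix.cons_val_fin_one, X_pow, Y_pow, Z_pow]
      ext <;> simp [X, Y, Z, *]

variable (f : R →+* S) (hm : (p : S) ^ m = 0) (hn1 : (p : R) ^ n1 = 0)
    (hn2 : (p : R) ^ n2 = 0) (hs1 : (p : S) ^ s1 = 0) (hs2 : (p : S) ^ s2 = 0)

theorem toHeisenberg_b1 : toHeisenberg f hm hn1 hn2 hs1 hs2 b1 = X :=
  PresentedGroup.toGroup.of _

theorem toHeisenberg_b2 : toHeisenberg f hm hn1 hn2 hs1 hs2 b2 = Y :=
  PresentedGroup.toGroup.of _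

theorem toHeisenberg_a : toHeisenberg f hm hn1 hn2 hs1 hs2 a = Z := by
  simp only [a, map_mul, map_inv, toHeisenberg_b1, toHeisenberg_b2, Y_inv_mul_X_inv_mul_Y_mul_X]

end ToHeisenberg

section Two

theorem H_succ (k : ℕ) : (H (k + 1) : Subgroup (GG 2 m n1 n2 s1 s2)) =
    closure {(a ^ 2 ^ k) ^ 2, (b1 ^ 2 ^ (k + 1)) ^ 2, (b2 ^ 2 ^ (k + 1)) ^ 2} := by
  simp only [H, ← pow_mul, ← pow_succ]

theorem b2_pow_mul_b1_pow (k : ℕ) :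
    (b2 ^ 2 ^ (k + 1) : GG 2 m n1 n2 s1 s2) * b1 ^ 2 ^ (k + 1) =
      b1 ^ 2 ^ (k + 1) * b2 ^ 2 ^ (k + 1) * (a ^ 2 ^ k) ^ (2 * 2 ^ (k + 1)) := by
  rw [pow_mul_pow_of_mul_eq b2_mul_b1 commute_a_b1 commute_a_b2, ← pow_mul]
  ring_nf

theorem relIndex_H_succ_dvd_eight (k : ℕ) :
    (H (k + 1)).relIndex (H k : Subgroup (GG 2 m n1 n2 s1 s2)) ∣ 8 := by
  rw [H_succ]
  exact relIndex_closure_sq_dvd_eight (commute_a_b1.pow_pow _ _) (commute_a_b2.pow_pow _ _)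
    (b2_pow_mul_b1_pow k)

theorem relIndex_H_succ_dvd_four {k : ℕ}
    (hk : (k = s2 ∧ k + 2 ≤ n2) ∨ (k = s2 ∧ k + 1 = n2) ∨ (k + 1 = s2 ∧ k + 1 = n2) ∨
      (k = s1 ∧ k + 1 = n1)) :
    (H (k + 1)).relIndex (H k : Subgroup (GG 2 m n1 n2 s1 s2)) ∣ 4 := by
  rw [H_succ]
  refine relIndex_closure_sq_dvd_four (commute_a_b1.pow_pow _ _) (commute_a_b2.pow_pow _ _)
    (b2_pow_mul_b1_pow k) ?_
  rcases hk with ⟨rfl, hn2⟩ | ⟨rfl, rfl⟩ | ⟨rfl, rfl⟩ | ⟨rfl, rfl⟩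
  · have hx :
        (a : GG 2 m n1 n2 s1 k) ^ 2 ^ k = ((b2 ^ 2 ^ (k + 1)) ^ 2) ^ 2 ^ (n2 - (k + 2)) := by
      rw [← b2_pow, ← pow_mul, ← pow_mul, ← pow_succ', ← pow_add]
      congr 2
      omega
    have hmem : ((b2 ^ 2 ^ (k + 1)) ^ 2) ^ 2 ^ (n2 - (k + 2)) ∈ closure
        {((a : GG 2 m n1 n2 s1 k) ^ 2 ^ k) ^ 2, (b1 ^ 2 ^ (k + 1)) ^ 2, (b2 ^ 2 ^ (k + 1)) ^ 2} :=
      pow_mem (subset_closure (by simp)) _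
    exact Or.inl (hx ▸ hmem)
  · exact Or.inr (Or.inr (Or.inl b2_pow.symm))
  · have hz : (b2 : GG 2 m n1 (k + 1) s1 (k + 1)) ^ 2 ^ (k + 1) = (a ^ 2 ^ k) ^ 2 := by
      rw [b2_pow, ← pow_mul, ← pow_succ]
    refine Or.inr (Or.inr (Or.inr ?_))
    rw [hz]
    exact subset_closure (by simp)
  · exact Or.inr (Or.inl b1_pow.symm)

open Heisenberg in
theorem eight_le_relIndex_H_succ {k : ℕ} (hm : k + 1 ≤ m) (hn1 : k + 2 ≤ n1) (hn2 : k + 2 ≤ n2)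
    (hs1 : k + 1 ≤ s1) (hs2 : k + 1 ≤ s2) :
    8 ≤ (H (k + 1)).relIndex (H k : Subgroup (GG 2 m n1 n2 s1 s2)) := by
  have two_pow_eq_zero {d e : ℕ} (h : d ≤ e) : (2 : ZMod (2 ^ d)) ^ e = 0 := by
    exact_mod_cast (ZMod.natCast_eq_zero_iff _ _).2 (pow_dvd_pow 2 h)
  set φ := toHeisenberg (ZMod.castHom (pow_dvd_pow 2 (k + 1).le_succ) (ZMod (2 ^ (k + 1))))
    (two_pow_eq_zero hm) (two_pow_eq_zero hn1) (two_pow_eq_zero hn2) (two_pow_eq_zero hs1)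
    (two_pow_eq_zero hs2)
  have hker : H (k + 1) ≤ φ.ker := by
    rw [H, closure_le]
    rintro _ (rfl | rfl | rfl)
    all_goals
      simp only [SetLike.mem_coe, MonoidHom.mem_ker, map_pow, φ, toHeisenberg_a, toHeisenberg_b1,
        toHeisenberg_b2, X_pow, Y_pow, Z_pow]
      ext <;> simp
  have hne : (H (k + 1)).relIndex (H k : Subgroup (GG 2 m n1 n2 s1 s2)) ≠ 0 :=
    ne_zero_of_dvd_ne_zero (by norm_num) (relIndex_H_succ_dvd_eight k)
  let f (t : Fin 2 × Fin 2 × Fin 2) : GG 2 m n1 n2 s1 s2 :=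
    (a ^ 2 ^ k) ^ (t.1 : ℕ) * (b1 ^ 2 ^ (k + 1)) ^ (t.2.1 : ℕ) * (b2 ^ 2 ^ (k + 1)) ^ (t.2.2 : ℕ)
  have hf (t) : f t ∈ H k := by
    refine mul_mem (mul_mem ?_ ?_) ?_ <;> exact pow_mem (subset_closure (by simp)) _
  have hφf (t) : φ (f t) =
      ⟨(2 ^ (k + 1) * t.2.1 : ℕ), (2 ^ (k + 1) * t.2.2 : ℕ), (2 ^ k * t.1 : ℕ)⟩ := by
    simp only [f, map_mul, map_pow, φ, toHeisenberg_a, toHeisenberg_b1, toHeisenberg_b2,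
      ← pow_mul, X_pow, Y_pow, Z_pow]
    ext <;> simp
  have hinj : Function.Injective (φ ∘ f) := by
    intro s t hst
    simp only [Function.comp_apply, hφf, Heisenberg.mk.injEq] at hst
    obtain ⟨h1, h2, h0⟩ := hst
    exact Prod.ext (ZMod.two_pow_mul_injective k h0)
      (Prod.ext (ZMod.two_pow_mul_injective (k + 1) h1) (ZMod.two_pow_mul_injective (k + 1) h2))
  simpa using card_le_relIndex_of_injective φ hker hne f hf hinj

end Two

end GG

/-- For `p = 2` and an admissible tuple, in `G = G_2(m,n1,n2,s1,s2)` with `a = [b2,b1]`,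
let `H_k = ⟨a^(2^k), b1^(2^(k+1)), b2^(2^(k+1))⟩` and
`K_k = ⟨a^(2^(k+1)), b1^(2^(k+2)), b2^(2^(k+2))⟩`. Then the least `k` with
`[H_k : K_k] < 8` is `min (n2 - 1) (min s1 s2)`. -/
theorem least_index_drop_p_two
    (m n1 n2 s1 s2 : ℕ) (h : Admissible 2 m n1 n2 s1 s2) :
    let b1 : GG 2 m n1 n2 s1 s2 := PresentedGroup.of 0
    let b2 : GG 2 m n1 n2 s1 s2 := PresentedGroup.of 1
    let a : GG 2 m n1 n2 s1 s2 := b2⁻¹ * b1⁻¹ * b2 * b1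
    let H : ℕ → Subgroup (GG 2 m n1 n2 s1 s2) := fun k =>
      Subgroup.closure {a ^ 2 ^ k, b1 ^ 2 ^ (k + 1), b2 ^ 2 ^ (k + 1)}
    let K : ℕ → Subgroup (GG 2 m n1 n2 s1 s2) := fun k =>
      Subgroup.closure {a ^ 2 ^ (k + 1), b1 ^ 2 ^ (k + 2), b2 ^ 2 ^ (k + 2)}
    IsLeast {k : ℕ | (K k).relIndex (H k) < 8} (min (n2 - 1) (min s1 s2)) := by
  intro b1 b2 a H K
  refine ⟨?_, fun k hk => ?_⟩
  · exact (Nat.le_of_dvd four_pos (GG.relIndex_H_succ_dvd_four h.min_cases)).trans_lt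
      (by norm_num)
  · refine not_lt.1 fun hlt => ?_
    obtain ⟨hm, hn1, hn2, hs1, hs2⟩ := h.lt_min hlt
    exact (GG.eight_le_relIndex_H_succ hm hn1 hn2 hs1 hs2).not_gt hk
end

section
/- Let p be a prime and let G be a finite p-group of nilpotency class exactly 2 with G' of order p^m and G/G' ≅ C_{p^n1} × C_{p^n2} with 0 < n2 ≤ n1. Let (p^o1, p^o2) be the maximum, with respect to the lexicographical order, of the set of pairs (|g1|,|g2|) where (g1,g2) ranges over all pairs of elements of G such that G/G' is the internal direct product of the cyclic subgroups generated by the images of g1 and g2, with the image of g_i having order p^(n_i). Then there exists such a pair (b1,b2) with |b_i| = p^(o_i) and b_i^(p^(n_i)) = [b2,b1]^(p^(s_i)) for i = 1, 2, where s_i = m + n_i - o_i. -/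
/-!
In a group of nilpotency class at most 2 the commutator map is bimultiplicative. Hence if the
images of `b1, b2` generate `G/G'`, then `b1, b2` generate `G` (as `G'` is central) and
`G' = ⟨c⟩` with `c = [b2, b1]` of order `p^m`. The element `b_i^(p^(n_i)) ∈ G'` has order
`p^(o_i - n_i)`, so it is `c^(p^(s_i) u_i)` with `u_i` prime to `p`. Replacing `(b1, b2)` by
`(b1^u2, b2^u1)` preserves the orders and the generating property and replaces `c` by
`c^(u1 u2)`, which absorbs both units.
-/

/-- `GoodPair p n1 n2 g1 g2` says that the images `x1, x2` of `g1, g2` in the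
abelianization `G/G'` realize `G/G'` as the internal direct product
`⟨x1⟩ × ⟨x2⟩` with `x_i` of order `p^(n_i)`. -/
def GoodPair (p n1 n2 : ℕ) {G : Type*} [Group G] (g1 g2 : G) : Prop :=
  Subgroup.closure {Abelianization.of g1} ⊔ Subgroup.closure {Abelianization.of g2} = ⊤ ∧
  Subgroup.closure {Abelianization.of g1} ⊓ Subgroup.closure {Abelianization.of g2} = ⊥ ∧
  orderOf (Abelianization.of g1) = p ^ n1 ∧ orderOf (Abelianization.of g2) = p ^ n2

/-- `(A, B)` is the maximum, in the lexicographic order, of the set of pairs of orders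
`(|g1|, |g2|)` where `(g1, g2)` ranges over the pairs with `GoodPair p n1 n2 g1 g2`. -/
def IsLexMaxOrders (G : Type*) [Group G] (p n1 n2 A B : ℕ) : Prop :=
  (∃ b1 b2 : G, GoodPair p n1 n2 b1 b2 ∧ orderOf b1 = A ∧ orderOf b2 = B) ∧
  ∀ g1 g2 : G, GoodPair p n1 n2 g1 g2 →
    orderOf g1 < A ∨ (orderOf g1 = A ∧ orderOf g2 ≤ B)

open scoped commutatorElement
open Subgroup

section ClassTwo

variable {G : Type*} [Group G] (hG : commutator G ≤ center G)
include hG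

theorem commutatorElement_mem_center_of_le_center (a b : G) : ⁅a, b⁆ ∈ center G :=
  hG (commutator_mem_commutator (mem_top a) (mem_top b))

theorem commutatorElement_mul_left_of_le_center (a b c : G) :
    ⁅a * b, c⁆ = ⁅a, c⁆ * ⁅b, c⁆ := by
  have hbc := mem_center_iff.mp (commutatorElement_mem_center_of_le_center hG b c)
  rw [commutatorElement_mul_left_eq_conj_mul, hbc, mul_inv_cancel_right,
    mem_center_iff.mp (commutatorElement_mem_center_of_le_center hG a c)]

theorem commutatorElement_mul_right_of_le_center (a b c : G) :
    ⁅a, b * c⁆ = ⁅a, b⁆ * ⁅a, c⁆ := by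
  have hac := mem_center_iff.mp (commutatorElement_mem_center_of_le_center hG a c)
  rw [commutatorElement_mul_right_eq_mul_conj, mul_assoc ⁅a, b⁆, hac, ← mul_assoc,
    mul_inv_cancel_right]

def commutatorLeftHom (h : G) : G →* G where
  toFun g := ⁅g, h⁆
  map_one' := commutatorElement_one_left h
  map_mul' a b := commutatorElement_mul_left_of_le_center hG a b h

def commutatorRightHom (g : G) : G →* G where
  toFun h := ⁅g, h⁆
  map_one' := commutatorElement_one_right g
  map_mul' a b := commutatorElement_mul_right_of_le_center hG g a b

theorem commutatorElement_pow_pow_of_le_center (a b : G) (k l : ℕ) :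
    ⁅a ^ k, b ^ l⁆ = ⁅a, b⁆ ^ (k * l) := by
  change commutatorLeftHom hG (b ^ l) (a ^ k) = _
  rw [map_pow]
  change commutatorRightHom hG a (b ^ l) ^ k = _
  rw [map_pow, ← pow_mul, mul_comm]
  rfl

theorem commutatorElement_inv_inv_of_le_center (a b : G) : ⁅a⁻¹, b⁻¹⁆ = ⁅a, b⁆ := by
  change commutatorLeftHom hG b⁻¹ a⁻¹ = _
  rw [map_inv]
  change (commutatorRightHom hG a b⁻¹)⁻¹ = _
  rw [map_inv, inv_inv]
  rfl

theorem commutator_le_of_closure_eq_top {s : Set G} (hs : closure s = ⊤) {K : Subgroup G}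
    (hK : ∀ x ∈ s, ∀ y ∈ s, ⁅x, y⁆ ∈ K) : commutator G ≤ K := by
  have hright : ∀ x ∈ s, ∀ y, ⁅x, y⁆ ∈ K := fun x hx y =>
    (closure_le (K.comap (commutatorRightHom hG x))).mpr (hK x hx) (hs ▸ mem_top y)
  rw [commutator_def, commutator_le]
  exact fun x _ y _ =>
    (closure_le (K.comap (commutatorLeftHom hG y))).mpr (fun x hx => hright x hx y)
      (hs ▸ mem_top x)

theorem commutator_eq_zpowers_of_closure_pair_eq_top {a b : G}
    (hab : closure {a, b} = ⊤) : commutator G = zpowers ⁅a, b⁆ := by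
  refine le_antisymm (commutator_le_of_closure_eq_top hG hab ?_)
    (zpowers_le.mpr (commutator_mem_commutator (mem_top a) (mem_top b)))
  simp only [Set.mem_insert_iff, Set.mem_singleton_iff]
  rintro x (rfl | rfl) y (rfl | rfl)
  · simp
  · exact mem_zpowers _
  · rw [← commutatorElement_inv y x]
    exact (zpowers _).inv_mem (mem_zpowers _)
  · simp

theorem eq_top_of_sup_commutator_eq_top {H : Subgroup G} (hH : H ⊔ commutator G = ⊤) :
    H = ⊤ := by
  have hcomm : commutator G ≤ H := by
    refine commutator_le_of_closure_eq_top hG (s := H ∪ commutator G)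
      (by rw [Subgroup.closure_union, closure_eq, closure_eq, hH]) ?_
    rintro x (hx | hx) y (hy | hy)
    · rw [commutatorElement_def]
      exact mul_mem (mul_mem (mul_mem hx hy) (inv_mem hx)) (inv_mem hy)
    · rw [commutatorElement_eq_one_iff_commute.mpr (mem_center_iff.mp (hG hy) x)]
      exact one_mem H
    all_goals
      rw [commutatorElement_eq_one_iff_commute.mpr (mem_center_iff.mp (hG hx) y).symm]
      exact one_mem H
  rwa [sup_eq_left.mpr hcomm] at hH

theorem eq_top_of_map_abelianizationOf_eq_top {H : Subgroup G}
    (hH : H.map Abelianization.of = ⊤) : H = ⊤ := by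
  refine eq_top_of_sup_commutator_eq_top hG ?_
  rw [← Abelianization.ker_of, ← comap_map_eq, hH, comap_top]

end ClassTwo

theorem exists_coprime_eq_pow_of_mem_zpowers {G : Type*} [Group G] {p m k : ℕ} (hp : p.Prime)
    {c x : G} (hc : orderOf c = p ^ m) (hx : x ∈ zpowers c) (hxk : orderOf x = p ^ k) :
    ∃ u, u.Coprime p ∧ x = c ^ (p ^ (m - k) * u) := by
  have hfin : IsOfFinOrder c := orderOf_pos_iff.mp (hc ▸ pow_pos hp.pos m)
  obtain ⟨t, rfl : c ^ t = x⟩ := hfin.mem_powers_iff_mem_zpowers.mpr hx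
  by_cases hdvd : p ^ m ∣ t
  · have hone : c ^ t = 1 := orderOf_dvd_iff_pow_eq_one.mp (hc ▸ hdvd)
    rw [hone, orderOf_one, eq_comm, Nat.pow_eq_one] at hxk
    refine ⟨1, Nat.coprime_one_left p, ?_⟩
    rw [hone, hxk.resolve_left hp.ne_one, Nat.sub_zero, mul_one, ← hc, pow_orderOf_eq_one]
  obtain ⟨a, u, hpu, rfl⟩ := Nat.exists_eq_pow_mul_and_not_dvd (n := t)
    (by rintro rfl; exact hdvd (dvd_zero _)) p hp.ne_one
  have ham : a < m := by
    by_contra! h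
    exact hdvd ((pow_dvd_pow p h).mul_right u)
  have hu : u.Coprime p := (hp.coprime_iff_not_dvd.mpr hpu).symm
  have hca : orderOf (c ^ p ^ a) = p ^ (m - a) := by
    rw [orderOf_pow_of_dvd (pow_ne_zero a hp.ne_zero) (hc ▸ pow_dvd_pow p ham.le), hc,
      Nat.pow_div ham.le hp.pos]
  rw [pow_mul, Nat.Coprime.orderOf_pow (hca ▸ (hu.pow_right _).symm), hca] at hxk
  have hmk : m - a = k := Nat.pow_right_injective hp.two_le hxk
  exact ⟨u, hu, by rw [show m - k = a by omega]⟩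

theorem zpowers_pow_eq_of_coprime {G : Type*} [Group G] {x : G} {k : ℕ}
    (h : k.Coprime (orderOf x)) : zpowers (x ^ k) = zpowers x := by
  refine le_antisymm (zpowers_le.mpr (npow_mem_zpowers x k)) ?_
  obtain ⟨l, hl⟩ := exists_pow_eq_self_of_coprime h
  exact zpowers_le.mpr ⟨l, by simpa using hl⟩

theorem pow_orderOf_abelianizationOf_mem_commutator {G : Type*} [Group G] (g : G) :
    g ^ orderOf (Abelianization.of g) ∈ commutator G := by
  rw [← Abelianization.ker_of, MonoidHom.mem_ker, map_pow, pow_orderOf_eq_one]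

theorem exists_coprime_pow_eq_of_commutator_eq_zpowers {G : Type*} [Group G] {p m n o : ℕ}
    (hp : p.Prime) {b c : G} (hG' : commutator G = zpowers c) (hc : orderOf c = p ^ m)
    (hb : orderOf b = p ^ o) (hn : orderOf (Abelianization.of b) = p ^ n) :
    ∃ u, u.Coprime p ∧ b ^ p ^ n = c ^ (p ^ (m + n - o) * u) := by
  have hno : n ≤ o :=
    (Nat.pow_dvd_pow_iff_le_right hp.one_lt).mp (hn ▸ hb ▸ orderOf_map_dvd _ b)
  have hmem : b ^ p ^ n ∈ zpowers c :=
    hG' ▸ hn ▸ pow_orderOf_abelianizationOf_mem_commutator b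
  have hord : orderOf (b ^ p ^ n) = p ^ (o - n) := by
    rw [orderOf_pow_of_dvd (pow_ne_zero n hp.ne_zero) (hb ▸ pow_dvd_pow p hno), hb,
      Nat.pow_div hno hp.pos]
  have hom : o - n ≤ m :=
    (Nat.pow_dvd_pow_iff_le_right hp.one_lt).mp (hord ▸ hc ▸ orderOf_dvd_of_mem_zpowers hmem)
  rw [show m + n - o = m - (o - n) by omega]
  exact exists_coprime_eq_pow_of_mem_zpowers hp hc hmem hord

namespace GoodPair

variable {G : Type*} [Group G] {p n1 n2 : ℕ} {g1 g2 : G}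

theorem pow_coprime (h : GoodPair p n1 n2 g1 g2) {u1 u2 : ℕ} (hu1 : u1.Coprime p)
    (hu2 : u2.Coprime p) : GoodPair p n1 n2 (g1 ^ u1) (g2 ^ u2) := by
  obtain ⟨hsup, hinf, h1, h2⟩ := h
  have hc1 : u1.Coprime (orderOf (Abelianization.of g1)) := h1 ▸ hu1.pow_right n1
  have hc2 : u2.Coprime (orderOf (Abelianization.of g2)) := h2 ▸ hu2.pow_right n2
  simp only [← zpowers_eq_closure] at hsup hinf
  simp only [GoodPair, map_pow, ← zpowers_eq_closure, zpowers_pow_eq_of_coprime hc1,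
    zpowers_pow_eq_of_coprime hc2, hc1.symm.orderOf_pow, hc2.symm.orderOf_pow]
  exact ⟨hsup, hinf, h1, h2⟩

theorem closure_eq_top (hG : commutator G ≤ center G) (h : GoodPair p n1 n2 g1 g2) :
    closure {g1, g2} = ⊤ := by
  refine eq_top_of_map_abelianizationOf_eq_top hG ?_
  rw [MonoidHom.map_closure, Set.image_pair, Set.insert_eq, Subgroup.closure_union]
  exact h.1

end GoodPair

theorem exists_normalized_basis_general
    (p : ℕ) (hp : p.Prime) (G : Type*) [Group G]
    (hclass : commutator G ≤ Subgroup.center G)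
    (m n1 n2 o1 o2 : ℕ)
    (hm : Nat.card ↥(commutator G) = p ^ m)
    (hmax : IsLexMaxOrders G p n1 n2 (p ^ o1) (p ^ o2)) :
    ∃ b1 b2 : G, GoodPair p n1 n2 b1 b2 ∧
      orderOf b1 = p ^ o1 ∧ orderOf b2 = p ^ o2 ∧
      b1 ^ p ^ n1 = (b2⁻¹ * b1⁻¹ * b2 * b1) ^ p ^ (m + n1 - o1) ∧
      b2 ^ p ^ n2 = (b2⁻¹ * b1⁻¹ * b2 * b1) ^ p ^ (m + n2 - o2) := by
  obtain ⟨⟨b1, b2, hgood, hb1, hb2⟩, -⟩ := hmax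
  have hG' : commutator G = zpowers ⁅b2, b1⁆ :=
    commutator_eq_zpowers_of_closure_pair_eq_top hclass
      (Set.pair_comm b1 b2 ▸ hgood.closure_eq_top hclass)
  rw [hG', Nat.card_zpowers] at hm
  obtain ⟨u1, hu1, h1⟩ :=
    exists_coprime_pow_eq_of_commutator_eq_zpowers hp hG' hm hb1 hgood.2.2.1
  obtain ⟨u2, hu2, h2⟩ :=
    exists_coprime_pow_eq_of_commutator_eq_zpowers hp hG' hm hb2 hgood.2.2.2
  -- The statement's commutator `x⁻¹ * y⁻¹ * x * y` is Mathlib's `⁅x⁻¹, y⁻¹⁆`.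
  have hcomm : (b2 ^ u1)⁻¹ * (b1 ^ u2)⁻¹ * b2 ^ u1 * b1 ^ u2 = ⁅b2, b1⁆ ^ (u1 * u2) := by
    rw [← commutatorElement_pow_pow_of_le_center hclass,
      ← commutatorElement_inv_inv_of_le_center hclass, commutatorElement_def, inv_inv, inv_inv]
  refine ⟨b1 ^ u2, b2 ^ u1, hgood.pow_coprime hu2 hu1, ?_, ?_, ?_, ?_⟩
  · rw [Nat.Coprime.orderOf_pow (hb1 ▸ (hu2.pow_right o1).symm), hb1]
  · rw [Nat.Coprime.orderOf_pow (hb2 ▸ (hu1.pow_right o2).symm), hb2]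
  · rw [pow_right_comm, h1, hcomm, ← pow_mul, ← pow_mul]
    ring_nf
  · rw [pow_right_comm, h2, hcomm, ← pow_mul, ← pow_mul]
    ring_nf

/-- Let `G` be a finite `p`-group of nilpotency class exactly 2 with `|G'| = p^m` and
`G/G' ≅ C_{p^n1} × C_{p^n2}` (`0 < n2 ≤ n1`), and let `(p^o1, p^o2)` be the
lexicographic maximum of the pairs of orders of suitable generating pairs. Then there is
such a pair `(b1, b2)` with `|b_i| = p^(o_i)` and `b_i^(p^(n_i)) = [b2,b1]^(p^(s_i))`
where `s_i = m + n_i - o_i`. -/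
theorem exists_normalized_basis
    (p : ℕ) (hp : p.Prime) (G : Type*) [Group G] [Finite G] (hGp : IsPGroup p G)
    (hclass : commutator G ≤ Subgroup.center G) (hnt : commutator G ≠ ⊥)
    (m n1 n2 o1 o2 : ℕ)
    (hm : Nat.card ↥(commutator G) = p ^ m)
    (hn2 : 0 < n2) (hn12 : n2 ≤ n1)
    (hab : Nonempty (Abelianization G ≃*
      Multiplicative (ZMod (p ^ n1)) × Multiplicative (ZMod (p ^ n2))))
    (hmax : IsLexMaxOrders G p n1 n2 (p ^ o1) (p ^ o2)) :
    ∃ b1 b2 : G, GoodPair p n1 n2 b1 b2 ∧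
      orderOf b1 = p ^ o1 ∧ orderOf b2 = p ^ o2 ∧
      b1 ^ p ^ n1 = (b2⁻¹ * b1⁻¹ * b2 * b1) ^ p ^ (m + n1 - o1) ∧
      b2 ^ p ^ n2 = (b2⁻¹ * b1⁻¹ * b2 * b1) ^ p ^ (m + n2 - o2) :=
  exists_normalized_basis_general p hp G hclass m n1 n2 o1 o2 hm hmax
end
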